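/- For every integer n ≥ 2, the sum over all set partitions π of {1,...,n} of (|π|-1)! equals 2·Bell_ord(n-1), where Bell_ord(m) = Σ_{k=0}^m S(m,k)·k! is the m-th ordered Bell (Fubini) number and S(m,k) denotes Stirling numbers of the second kind. Equivalently, Σ_{k=1}^n S(n,k)·(k-1)! = 2·Σ_{k=0}^{n-1} S(n-1,k)·k!. -/

import Mathlib

open Finset

/-- Stirling numbers of the second kind. -/
def stirling2 : ℕ → ℕ → ℕ
  | 0, 0 => 1
  | 0, _ + 1 => 0
  | _ + 1, 0 => 0
  | n + 1, k + 1 => stirling2 n k + (k + 1) * stirling2 n (k + 1)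

/-- Ordered Bell (Fubini) numbers. -/
def ordBell (m : ℕ) : ℕ := ∑ k ∈ Finset.range (m + 1), stirling2 m k * k.factorial

/-!
Summing any function of the number of blocks over all partitions of an `n`-set gives the
Stirling-weighted sum `∑ₖ S(n, k) f(k)`: removing one point from a partition of `insert a s`
leaves a partition `π` of `s`, and the point either formed a singleton or sat in one of the
`|π|` blocks. With `f k = (k - 1)!`, the recurrence `S(m+1, k+1) = S(m, k) + (k+1) S(m, k+1)`
splits the sum into two copies of `∑ₖ S(m, k) k!`, the term `k = 0` vanishing for `m ≥ 1`.
-/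

open scoped Nat

theorem stirling2_eq_stirlingSecond : stirling2 = Nat.stirlingSecond := by
  funext n k
  induction n generalizing k with
  | zero => cases k <;> rfl
  | succ n ih =>
    cases k with
    | zero => rfl
    | succ k => rw [stirling2, Nat.stirlingSecond_succ_succ, ih, ih, add_comm]

namespace Nat

variable {M : Type*} [AddCommMonoid M]

theorem sum_range_stirlingSecond_succ_smul (m : ℕ) (f : ℕ → M) :
    ∑ k ∈ range (m + 2), stirlingSecond (m + 1) k • f k =
      ∑ k ∈ range (m + 1), stirlingSecond m k • (f (k + 1) + k • f k) := by
  set g : ℕ → M := fun k ↦ stirlingSecond m k • k • f k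
  have hshift : ∑ k ∈ range (m + 1), ((k + 1) * stirlingSecond m (k + 1)) • f (k + 1) =
      ∑ k ∈ range (m + 1), g k :=
    calc _ = ∑ k ∈ range (m + 1), g (k + 1) :=
          sum_congr rfl fun k _ ↦ by rw [mul_comm, mul_smul]
      _ = ∑ k ∈ range (m + 2), g k := by simp [sum_range_succ' g, g]
      _ = ∑ k ∈ range (m + 1), g k := by
        simp [sum_range_succ g, g, stirlingSecond_eq_zero_of_lt (lt_add_one m)]
  rw [sum_range_succ', stirlingSecond_succ_zero, zero_smul, add_zero]
  simp only [stirlingSecond_succ_succ, add_smul, smul_add, sum_add_distrib, hshift, g, add_comm]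

theorem sum_range_stirlingSecond_mul_factorial_pred {m : ℕ} (hm : m ≠ 0) :
    ∑ k ∈ range (m + 2), stirlingSecond (m + 1) k * (k - 1)! =
      2 * ∑ k ∈ range (m + 1), stirlingSecond m k * k ! := by
  obtain ⟨m, rfl⟩ := exists_eq_add_one_of_ne_zero hm
  have hstep := sum_range_stirlingSecond_succ_smul (m + 1) fun k ↦ (k - 1)!
  simp only [smul_eq_mul] at hstep
  rw [hstep, mul_sum]
  refine sum_congr rfl fun k _ ↦ ?_
  rcases eq_or_ne k 0 with rfl | hk
  · simp
  · rw [Nat.add_sub_cancel, mul_factorial_pred hk]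
    ring

end Nat

namespace Finpartition

variable {α : Type*} [DecidableEq α] {s : Finset α} {a : α}

/-- The choice `b = ∅` inserts `a` as a new singleton block. -/
@[simps]
def insertInto (P : Finpartition s) (ha : a ∉ s) {b : Finset α} (hb : b ∈ insert ∅ P.parts) :
    Finpartition (insert a s) where
  parts := insert (insert a b) (P.parts.erase b)
  supIndep := by
    rw [supIndep_iff_pairwiseDisjoint, coe_insert]
    refine (P.disjoint.subset (erase_subset b P.parts)).insert fun c hc _ ↦ ?_
    have hc' := mem_of_mem_erase hc
    refine disjoint_insert_left.2 ⟨fun hac ↦ ha (P.le hc' hac), ?_⟩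
    rcases mem_insert.1 hb with rfl | hb
    · exact disjoint_empty_left c
    · exact P.disjoint hb hc' (ne_of_mem_erase hc).symm
  sup_parts := by
    have hbs : b ∪ (P.parts.erase b).sup id = s := by
      rcases mem_insert.1 hb with rfl | hb
      · rw [erase_eq_of_notMem P.empty_notMem_parts, P.sup_parts, empty_union]
      · have h := P.sup_parts
        rwa [← insert_erase hb, sup_insert] at h
    rw [sup_insert, id, sup_eq_union, insert_union, hbs]
  bot_notMem := by
    rw [bot_eq_empty, mem_insert, not_or]
    exact ⟨(insert_ne_empty a b).symm, fun h ↦ P.empty_notMem_parts (mem_of_mem_erase h)⟩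

lemma subset_of_mem_insert_empty (P : Finpartition s) {b : Finset α}
    (hb : b ∈ insert ∅ P.parts) : b ⊆ s := by
  rcases mem_insert.1 hb with rfl | hb
  · exact empty_subset s
  · exact P.le hb

lemma insert_notMem_parts (P : Finpartition s) (ha : a ∉ s) (b : Finset α) :
    insert a b ∉ P.parts :=
  fun h ↦ ha (P.le h (mem_insert_self a b))

lemma part_insertInto (P : Finpartition s) (ha : a ∉ s) {b : Finset α}
    (hb : b ∈ insert ∅ P.parts) : (P.insertInto ha hb).part a = insert a b :=
  part_eq_of_mem _ (mem_insert_self _ _) (mem_insert_self a b)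

lemma restrict_insertInto (P : Finpartition s) (ha : a ∉ s) {b : Finset α}
    (hb : b ∈ insert ∅ P.parts) : (P.insertInto ha hb).restrict (subset_insert a s) = P := by
  have hab : insert a b ⊓ s = b := by
    rw [inf_eq_inter, insert_inter_of_notMem ha, inter_eq_left.2 (P.subset_of_mem_insert_empty hb)]
  have hparts : (P.parts.erase b).image (· ⊓ s) = P.parts.erase b := by
    exact (image_congr fun c hc ↦ inter_eq_left.2 (P.le (mem_of_mem_erase hc))).trans image_id
  ext1
  simp only [restrict, insertInto_parts, image_insert, hab, hparts, bot_eq_empty]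
  rcases mem_insert.1 hb with rfl | hb
  · rw [erase_insert (notMem_erase _ _), erase_eq_of_notMem P.empty_notMem_parts]
  · rw [insert_erase hb, erase_eq_of_notMem P.empty_notMem_parts]

lemma part_inter_mem_insert_empty (P : Finpartition (insert a s)) :
    P.part a ∩ s ∈ insert ∅ (P.restrict (subset_insert a s)).parts := by
  rcases eq_or_ne (P.part a ∩ s) ∅ with h | h
  · exact h ▸ mem_insert_self _ _
  · exact mem_insert_of_mem <|
      mem_erase.2 ⟨h, mem_image_of_mem _ (P.part_mem.2 (mem_insert_self a s))⟩

lemma insertInto_restrict (P : Finpartition (insert a s)) (ha : a ∉ s) :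
    (P.restrict (subset_insert a s)).insertInto ha (part_inter_mem_insert_empty P) = P := by
  set T := P.part a
  have hT : T ∈ P.parts := P.part_mem.2 (mem_insert_self a s)
  have haT : a ∈ T := P.mem_part_self.2 (mem_insert_self a s)
  have hother : ∀ c ∈ P.parts.erase T, c ⊓ s = c := fun c hc ↦ by
    refine inter_eq_left.2 fun x hx ↦
      (mem_insert.1 (P.le (mem_of_mem_erase hc) hx)).resolve_left ?_
    rintro rfl
    exact ne_of_mem_erase hc (P.eq_of_mem_parts (mem_of_mem_erase hc) hT hx haT)
  have hTs : T ∩ s ∉ P.parts.erase T := fun h ↦ by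
    obtain ⟨x, hx⟩ := P.nonempty_of_mem_parts (mem_of_mem_erase h)
    exact ne_of_mem_erase h
      (P.eq_of_mem_parts (mem_of_mem_erase h) hT hx (mem_of_mem_inter_left hx))
  have himage : P.parts.image (· ⊓ s) = insert (T ∩ s) (P.parts.erase T) := by
    conv_lhs => rw [← insert_erase hT]
    rw [image_insert, (image_congr hother).trans image_id, inf_eq_inter]
  ext1
  rw [insertInto_parts, insert_inter_distrib, insert_eq_of_mem haT,
    inter_eq_left.2 (P.le hT)]
  simp only [restrict, himage, bot_eq_empty]
  rw [erase_right_comm, erase_insert hTs,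
    erase_eq_of_notMem fun h ↦ P.empty_notMem_parts (mem_of_mem_erase h), insert_erase hT]

variable {M : Type*} [AddCommMonoid M]

theorem sum_univ_parts_insert (ha : a ∉ s) (f : Finset (Finset α) → M) :
    ∑ P : Finpartition (insert a s), f P.parts =
      ∑ P : Finpartition s, ∑ b ∈ insert ∅ P.parts,
        f (insert (insert a b) (P.parts.erase b)) := by
  rw [sum_sigma']
  refine sum_bij' (fun P _ ↦ ⟨P.restrict (subset_insert a s), P.part a ∩ s⟩)
    (fun x hx ↦ x.1.insertInto ha (mem_sigma.1 hx).2)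
    (fun P _ ↦ mem_sigma.2 ⟨mem_univ _, part_inter_mem_insert_empty P⟩)
    (fun _ _ ↦ mem_univ _)
    (fun P _ ↦ insertInto_restrict P ha) (fun ⟨P, b⟩ hb ↦ ?_) (fun P _ ↦ ?_)
  · have hb := (mem_sigma.1 hb).2
    rw [restrict_insertInto, part_insertInto, insert_inter_of_notMem ha,
      inter_eq_left.2 (P.subset_of_mem_insert_empty hb)]
  · exact congrArg (f ·.parts) (insertInto_restrict P ha).symm

theorem sum_univ_card_parts_insert (ha : a ∉ s) (f : ℕ → M) :
    ∑ P : Finpartition (insert a s), f #P.parts =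
      ∑ P : Finpartition s, (f (#P.parts + 1) + #P.parts • f #P.parts) := by
  refine (sum_univ_parts_insert ha (f ∘ card)).trans ?_
  refine sum_congr rfl fun P _ ↦ ?_
  have hcard :
      ∀ b ∈ P.parts, (f ∘ card) (insert (insert a b) (P.parts.erase b)) = f #P.parts :=
    fun b hb ↦ by
      rw [Function.comp_apply, card_insert_of_notMem fun h ↦
        P.insert_notMem_parts ha b (mem_of_mem_erase h), card_erase_add_one hb]
  rw [sum_insert P.empty_notMem_parts, erase_eq_of_notMem P.empty_notMem_parts,
    Function.comp_apply, card_insert_of_notMem (P.insert_notMem_parts ha ∅),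
    sum_congr rfl hcard, sum_const]

theorem sum_univ_card_parts (s : Finset α) (f : ℕ → M) :
    ∑ P : Finpartition s, f #P.parts =
      ∑ k ∈ range (#s + 1), Nat.stirlingSecond #s k • f k := by
  induction s using Finset.induction_on generalizing f with
  | empty =>
    have : Unique (Finpartition (∅ : Finset α)) := inferInstanceAs (Unique (Finpartition ⊥))
    simp [parts_eq_empty_iff.2 rfl]
  | insert a s ha ih =>
    rw [sum_univ_card_parts_insert ha, ih fun k ↦ f (k + 1) + k • f k, card_insert_of_notMem ha,
      Nat.sum_range_stirlingSecond_succ_smul]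

end Finpartition

theorem coefficient_mass (n : ℕ) (hn : 2 ≤ n) :
    (∑ π : Finpartition (Finset.univ : Finset (Fin n)), (π.parts.card - 1).factorial)
      = 2 * ordBell (n - 1) ∧
    (∑ k ∈ Finset.Icc 1 n, stirling2 n k * (k - 1).factorial) = 2 * ordBell (n - 1) := by
  obtain ⟨m, rfl⟩ : ∃ m, n = m + 1 := ⟨n - 1, by omega⟩
  rw [Nat.add_sub_cancel]
  have hrange : ∑ k ∈ range (m + 1 + 1), stirling2 (m + 1) k * (k - 1)! = 2 * ordBell m := by
    rw [ordBell, stirling2_eq_stirlingSecond,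
      Nat.sum_range_stirlingSecond_mul_factorial_pred (by omega)]
  constructor
  · rw [Finpartition.sum_univ_card_parts _ fun k ↦ (k - 1)!, card_univ, Fintype.card_fin,
      ← hrange, stirling2_eq_stirlingSecond]
    simp only [smul_eq_mul]
  · rwa [Nat.range_succ_eq_Icc_zero, ← insert_Icc_add_one_left_eq_Icc (Nat.zero_le _),
      sum_insert (by simp), stirling2, zero_mul, zero_add] at hrange
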